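/- For each n ≥ 1, sup over I_p of φ_n/φ_{n+1} equals lim_{x→0⁺} φ_n(x)/φ_{n+1}(x) = ψ_{p′}( ∫₀^{π_p/2} ψ_p(φ_{n−1}(s)) ds / ∫₀^{π_p/2} ψ_p(φ_n(s)) ds ), and this supremum is finite and nonincreasing in n for n ≥ 2. -/

import Mathlib

open Real Set

noncomputable def psi (p t : ℝ) : ℝ := t * |t| ^ (p - 2)

noncomputable def piP (p : ℝ) : ℝ := 2 * (p - 1) ^ (1/p) * ((π / p) / Real.sin (π / p))

noncomputable def phi (p : ℝ) : ℕ → ℝ → ℝ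
  | 0 => fun _ => 1
  | n + 1 => fun x => ∫ θ in (0:ℝ)..x,
      psi (p / (p - 1)) (∫ s in θ..(piP p / 2), psi p (phi p n s))

open Filter
open Topology

/-!
Write `T = π_p / 2` and `A_n = ∫₀^T ψ_p(φ_n)`. By induction, `φ_n / φ_{n+1}` is nonincreasing
on `(0, T]`, through the monotone form of l'Hôpital's rule: if `φ_n / φ_{n+1}` is nonincreasing,
so is `ψ_p(φ_n) / ψ_p(φ_{n+1})`, hence (the tails `∫ₓ^T` vanish at `T`) so is the ratio of the
tails of these, hence so is the ratio of their images under `ψ_{p'}`, which are the derivatives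
of `φ_{n+1}` and `φ_{n+2}`, both vanishing at `0`. So the supremum is the limit at `0⁺`, the ratio
of the derivatives at `0`, namely `ψ_{p'}(A_{n-1} / A_n)`. Bounding
`φ_{n+1} ≤ ψ_{p'}(A_n / A_{n+1}) φ_{n+2}`, applying `ψ_p` and integrating gives
`A_{n+1} / A_{n+2} ≤ A_n / A_{n+1}`, which is the monotonicity in `n`.
-/

section Psi

variable {q : ℝ}

lemma psi_zero (q : ℝ) : psi q 0 = 0 := by simp [psi]

lemma psi_of_nonneg (hq : q ≠ 1) {t : ℝ} (ht : 0 ≤ t) : psi q t = t ^ (q - 1) := by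
  rcases ht.eq_or_lt with rfl | ht
  · rw [psi_zero, Real.zero_rpow (sub_ne_zero.mpr hq)]
  · rw [psi, abs_of_pos ht, ← Real.rpow_one_add' ht.le (by intro h; apply hq; linarith)]
    ring_nf

lemma psi_mul (q a b : ℝ) : psi q (a * b) = psi q a * psi q b := by
  simp only [psi, abs_mul, Real.mul_rpow (abs_nonneg a) (abs_nonneg b)]
  ring

lemma psi_div (q a b : ℝ) : psi q (a / b) = psi q a / psi q b := by
  simp only [psi, abs_div, Real.div_rpow (abs_nonneg a) (abs_nonneg b)]
  rw [mul_div_mul_comm]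

lemma abs_psi (q t : ℝ) : |psi q t| = psi q |t| := by
  simp only [psi, abs_mul, abs_abs, abs_of_nonneg (Real.rpow_nonneg (abs_nonneg t) _)]

lemma psi_pos (hq : 1 < q) {t : ℝ} (ht : 0 < t) : 0 < psi q t := by
  rw [psi_of_nonneg hq.ne' ht.le]
  exact Real.rpow_pos_of_pos ht _

lemma psi_nonneg (hq : 1 < q) {t : ℝ} (ht : 0 ≤ t) : 0 ≤ psi q t := by
  rw [psi_of_nonneg hq.ne' ht]
  exact Real.rpow_nonneg ht _

lemma monotoneOn_psi (hq : 1 < q) : MonotoneOn (psi q) (Ici 0) := by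
  intro s hs t ht hst
  rw [psi_of_nonneg hq.ne' hs, psi_of_nonneg hq.ne' ht]
  exact Real.rpow_le_rpow hs hst (by linarith)

lemma continuous_psi (hq : 1 < q) : Continuous (psi q) := by
  refine continuous_iff_continuousAt.mpr fun t => ?_
  rcases eq_or_ne t 0 with rfl | ht
  · have hbound : Tendsto (fun t : ℝ => |t| ^ (q - 1)) (𝓝 0) (𝓝 0) := by
      have := (continuous_abs.rpow_const (p := q - 1) fun _ => Or.inr (by linarith)).tendsto 0
      rwa [abs_zero, Real.zero_rpow (by linarith)] at this
    refine (squeeze_zero_norm (fun t => ?_) hbound).trans (by rw [psi_zero])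
    rw [Real.norm_eq_abs, abs_psi, psi_of_nonneg hq.ne' (abs_nonneg t)]
  · exact continuousAt_id.mul (continuous_abs.continuousAt.rpow_const (Or.inl (abs_ne_zero.mpr ht)))

lemma psi_psi_conj {p : ℝ} (hp : 1 < p) {t : ℝ} (ht : 0 ≤ t) :
    psi p (psi (p / (p - 1)) t) = t := by
  have hp1 : p - 1 ≠ 0 := by linarith
  have hq : p / (p - 1) ≠ 1 := by
    rw [Ne, div_eq_one_iff_eq hp1]
    linarith
  rw [psi_of_nonneg hq ht, psi_of_nonneg hp.ne' (Real.rpow_nonneg ht _), ← Real.rpow_mul ht,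
    show (p / (p - 1) - 1) * (p - 1) = 1 by field_simp; ring, Real.rpow_one]

lemma AntitoneOn.psi_div_psi (hq : 1 < q) {u v : ℝ → ℝ} {s : Set ℝ}
    (hu : ∀ x ∈ s, 0 ≤ u x) (hv : ∀ x ∈ s, 0 ≤ v x) (h : AntitoneOn (fun x => u x / v x) s) :
    AntitoneOn (fun x => psi q (u x) / psi q (v x)) s := by
  simp_rw [← psi_div]
  exact (monotoneOn_psi hq).comp_AntitoneOn h fun x hx =>
    mem_Ici.mpr (div_nonneg (hu x hx) (hv x hx))

end Psi

section MonotoneLHopital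

variable {f g f' g' : ℝ → ℝ}

lemma antitoneOn_div_of_deriv_mul_sub_nonpos {s : Set ℝ} (hs : Convex ℝ s)
    (hf : ∀ x ∈ s, HasDerivAt f (f' x) x) (hg : ∀ x ∈ s, HasDerivAt g (g' x) x)
    (hg0 : ∀ x ∈ s, 0 < g x) (h : ∀ x ∈ interior s, f' x * g x - f x * g' x ≤ 0) :
    AntitoneOn (fun x => f x / g x) s := by
  have hd : ∀ x ∈ s, HasDerivAt (fun x => f x / g x) ((f' x * g x - f x * g' x) / g x ^ 2) x :=
    fun x hx => (hf x hx).div (hg x hx) (hg0 x hx).ne'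
  refine antitoneOn_of_deriv_nonpos hs (fun x hx => (hd x hx).continuousAt.continuousWithinAt)
    (fun x hx => (hd x (interior_subset hx)).differentiableAt.differentiableWithinAt) fun x hx => ?_
  rw [(hd x (interior_subset hx)).deriv]
  exact div_nonpos_of_nonpos_of_nonneg (h x hx) (sq_nonneg _)

variable {a b : ℝ}

lemma antitoneOn_div_of_antitoneOn_deriv_div_left
    (hf : ∀ x ∈ Icc a b, HasDerivAt f (f' x) x) (hg : ∀ x ∈ Icc a b, HasDerivAt g (g' x) x)
    (hfa : f a = 0) (hga : g a = 0) (hg' : ∀ x ∈ Ioo a b, 0 < g' x)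
    (hr : AntitoneOn (fun x => f' x / g' x) (Ioo a b)) :
    AntitoneOn (fun x => f x / g x) (Ioc a b) := by
  have hfc : ContinuousOn f (Icc a b) := fun x hx => (hf x hx).continuousAt.continuousWithinAt
  have hgc : ContinuousOn g (Icc a b) := fun x hx => (hg x hx).continuousAt.continuousWithinAt
  have hgmono : StrictMonoOn g (Icc a b) := strictMonoOn_of_deriv_pos (convex_Icc a b) hgc
    fun x hx => by
      rw [interior_Icc] at hx
      rw [(hg x (Ioo_subset_Icc_self hx)).deriv]
      exact hg' x hx
  have hgpos : ∀ x ∈ Ioc a b, 0 < g x := fun x hx =>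
    hga ▸ hgmono (left_mem_Icc.mpr (hx.1.le.trans hx.2)) (Ioc_subset_Icc_self hx) hx.1
  refine antitoneOn_div_of_deriv_mul_sub_nonpos (convex_Ioc a b)
    (fun x hx => hf x (Ioc_subset_Icc_self hx)) (fun x hx => hg x (Ioc_subset_Icc_self hx))
    hgpos fun x hx => ?_
  rw [interior_Ioc] at hx
  have hsub : Icc a x ⊆ Icc a b := Icc_subset_Icc_right hx.2.le
  obtain ⟨c, hc, hcauchy⟩ := exists_ratio_hasDerivAt_eq_ratio_slope f f' hx.1 (hfc.mono hsub)
    (fun y hy => hf y (hsub (Ioo_subset_Icc_self hy))) g g' (hgc.mono hsub)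
    (fun y hy => hg y (hsub (Ioo_subset_Icc_self hy)))
  rw [hfa, hga, sub_zero, sub_zero] at hcauchy
  have hc' : c ∈ Ioo a b := ⟨hc.1, hc.2.trans hx.2⟩
  have hratio : f' x / g' x ≤ f' c / g' c := hr hc' hx hc.2.le
  rw [div_le_div_iff₀ (hg' x hx) (hg' c hc')] at hratio
  refine nonpos_of_mul_nonpos_left ?_ (hg' c hc')
  nlinarith [mul_le_mul_of_nonneg_left hratio (hgpos x ⟨hx.1, hx.2.le⟩).le,
    congrArg (· * g' x) hcauchy]

lemma antitoneOn_div_of_antitoneOn_deriv_div_right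
    (hf : ∀ x ∈ Icc a b, HasDerivAt f (f' x) x) (hg : ∀ x ∈ Icc a b, HasDerivAt g (g' x) x)
    (hfb : f b = 0) (hgb : g b = 0) (hg' : ∀ x ∈ Ioo a b, g' x < 0)
    (hr : AntitoneOn (fun x => f' x / g' x) (Ioo a b)) :
    AntitoneOn (fun x => f x / g x) (Ico a b) := by
  have hfc : ContinuousOn f (Icc a b) := fun x hx => (hf x hx).continuousAt.continuousWithinAt
  have hgc : ContinuousOn g (Icc a b) := fun x hx => (hg x hx).continuousAt.continuousWithinAt
  have hganti : StrictAntiOn g (Icc a b) := strictAntiOn_of_deriv_neg (convex_Icc a b) hgc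
    fun x hx => by
      rw [interior_Icc] at hx
      rw [(hg x (Ioo_subset_Icc_self hx)).deriv]
      exact hg' x hx
  have hgpos : ∀ x ∈ Ico a b, 0 < g x := fun x hx =>
    hgb ▸ hganti (Ico_subset_Icc_self hx) (right_mem_Icc.mpr (hx.1.trans hx.2.le)) hx.2
  refine antitoneOn_div_of_deriv_mul_sub_nonpos (convex_Ico a b)
    (fun x hx => hf x (Ico_subset_Icc_self hx)) (fun x hx => hg x (Ico_subset_Icc_self hx))
    hgpos fun x hx => ?_
  rw [interior_Ico] at hx
  have hsub : Icc x b ⊆ Icc a b := Icc_subset_Icc_left hx.1.le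
  obtain ⟨c, hc, hcauchy⟩ := exists_ratio_hasDerivAt_eq_ratio_slope f f' hx.2 (hfc.mono hsub)
    (fun y hy => hf y (hsub (Ioo_subset_Icc_self hy))) g g' (hgc.mono hsub)
    (fun y hy => hg y (hsub (Ioo_subset_Icc_self hy)))
  rw [hfb, hgb, zero_sub, zero_sub] at hcauchy
  have hc' : c ∈ Ioo a b := ⟨hx.1.trans hc.1, hc.2⟩
  have hratio : f' c / g' c ≤ f' x / g' x := hr hx hc' hc.1.le
  rw [← neg_div_neg_eq (f' c), ← neg_div_neg_eq (f' x),
    div_le_div_iff₀ (neg_pos.mpr (hg' c hc')) (neg_pos.mpr (hg' x hx))] at hratio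
  refine nonpos_of_mul_nonpos_left ?_ (neg_pos.mpr (hg' c hc'))
  nlinarith [mul_le_mul_of_nonneg_left hratio (hgpos x ⟨hx.1.le, hx.2⟩).le,
    congrArg (· * g' x) hcauchy]

lemma tendsto_div_nhdsNE_of_hasDerivAt {x f'x g'x : ℝ} (hf : HasDerivAt f f'x x)
    (hg : HasDerivAt g g'x x) (hfx : f x = 0) (hgx : g x = 0) (hg'x : g'x ≠ 0) :
    Tendsto (fun y => f y / g y) (𝓝[≠] x) (𝓝 (f'x / g'x)) := by
  refine ((hasDerivAt_iff_tendsto_slope.mp hf).div (hasDerivAt_iff_tendsto_slope.mp hg)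
    hg'x).congr' (eventually_nhdsWithin_of_forall fun y hy => ?_)
  show slope f x y / slope g x y = f y / g y
  rw [slope_def_field, slope_def_field, hfx, hgx, sub_zero, sub_zero]
  exact div_div_div_cancel_right₀ (sub_ne_zero.mpr hy) _ _

end MonotoneLHopital

section Supremum

variable {r : ℝ → ℝ} {a b L : ℝ}

lemma AntitoneOn.le_of_tendsto_nhdsGT (ha : AntitoneOn r (Ioc a b))
    (hl : Tendsto r (𝓝[>] a) (𝓝 L)) {x : ℝ} (hx : x ∈ Ioc a b) : r x ≤ L :=
  ge_of_tendsto hl <| mem_of_superset (Ioc_mem_nhdsGT hx.1) fun _ hy =>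
    ha ⟨hy.1, hy.2.trans hx.2⟩ hx hy.2

lemma AntitoneOn.csSup_image_Ioc_eq (hab : a < b) (ha : AntitoneOn r (Ioc a b))
    (hl : Tendsto r (𝓝[>] a) (𝓝 L)) : sSup (r '' Ioc a b) = L := by
  have hub : ∀ y ∈ r '' Ioc a b, y ≤ L := by
    rintro _ ⟨x, hx, rfl⟩
    exact ha.le_of_tendsto_nhdsGT hl hx
  refine le_antisymm (csSup_le ((nonempty_Ioc.mpr hab).image r) hub) (le_of_tendsto hl ?_)
  exact mem_of_superset (Ioc_mem_nhdsGT hab) fun _ hy => le_csSup ⟨L, hub⟩ (mem_image_of_mem r hy)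

end Supremum

section Phi

variable {p : ℝ}

lemma one_lt_conj_exponent (hp : 1 < p) : 1 < p / (p - 1) := by
  rw [lt_div_iff₀ (by linarith)]
  linarith

lemma piP_pos (hp : 1 < p) : 0 < piP p := by
  have hπp : 0 < π / p := div_pos Real.pi_pos (by linarith)
  have hsin : 0 < Real.sin (π / p) :=
    Real.sin_pos_of_pos_of_lt_pi hπp (div_lt_self Real.pi_pos hp)
  have : 0 < (p - 1) ^ (1 / p) := Real.rpow_pos_of_pos (by linarith) _
  unfold piP
  positivity

noncomputable def phiTail (p : ℝ) (n : ℕ) (x : ℝ) : ℝ := ∫ s in x..piP p / 2, psi p (phi p n s)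

lemma phi_succ (p : ℝ) (n : ℕ) :
    phi p (n + 1) = fun x => ∫ θ in (0 : ℝ)..x, psi (p / (p - 1)) (phiTail p n θ) :=
  rfl

lemma phi_succ_zero (n : ℕ) : phi p (n + 1) 0 = 0 := intervalIntegral.integral_same

lemma phiTail_piP_half (n : ℕ) : phiTail p n (piP p / 2) = 0 := intervalIntegral.integral_same

lemma continuous_integral_left {f : ℝ → ℝ} (hf : Continuous f) (b : ℝ) :
    Continuous fun x => ∫ s in x..b, f s := by
  simp_rw [intervalIntegral.integral_symm b]
  exact (intervalIntegral.continuous_primitive (fun _ _ => hf.intervalIntegrable _ _) b).neg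

lemma continuous_phi (hp : 1 < p) : ∀ n, Continuous (phi p n)
  | 0 => continuous_const
  | n + 1 => by
    rw [phi_succ]
    exact intervalIntegral.continuous_primitive (fun _ _ => ((continuous_psi
      (one_lt_conj_exponent hp)).comp (continuous_integral_left ((continuous_psi hp).comp
        (continuous_phi hp n)) _)).intervalIntegrable _ _) 0

lemma continuous_phiTail (hp : 1 < p) (n : ℕ) : Continuous (phiTail p n) :=
  continuous_integral_left ((continuous_psi hp).comp (continuous_phi hp n)) _

lemma hasDerivAt_phiTail (hp : 1 < p) (n : ℕ) (x : ℝ) :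
    HasDerivAt (phiTail p n) (-psi p (phi p n x)) x :=
  have hc : Continuous fun s => psi p (phi p n s) := (continuous_psi hp).comp (continuous_phi hp n)
  intervalIntegral.integral_hasDerivAt_left (hc.intervalIntegrable _ _)
    (hc.stronglyMeasurableAtFilter _ _) hc.continuousAt

lemma hasDerivAt_phi_succ (hp : 1 < p) (n : ℕ) (x : ℝ) :
    HasDerivAt (phi p (n + 1)) (psi (p / (p - 1)) (phiTail p n x)) x :=
  ((continuous_psi (one_lt_conj_exponent hp)).comp
    (continuous_phiTail hp n)).integral_hasStrictDerivAt 0 x |>.hasDerivAt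

lemma phiTail_pos_of_pos (hp : 1 < p) {n : ℕ} (h : ∀ x ∈ Ioo 0 (piP p / 2), 0 < phi p n x)
    {x : ℝ} (hx : x ∈ Ico 0 (piP p / 2)) : 0 < phiTail p n x :=
  intervalIntegral.intervalIntegral_pos_of_pos_on
    (((continuous_psi hp).comp (continuous_phi hp n)).intervalIntegrable _ _)
    (fun s hs => psi_pos hp (h s ⟨hx.1.trans_lt hs.1, hs.2⟩)) hx.2

lemma phi_succ_pos_of_pos (hp : 1 < p) {n : ℕ} (h : ∀ x ∈ Ico 0 (piP p / 2), 0 < phiTail p n x)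
    {x : ℝ} (hx : x ∈ Ioc 0 (piP p / 2)) : 0 < phi p (n + 1) x :=
  intervalIntegral.intervalIntegral_pos_of_pos_on
    (((continuous_psi (one_lt_conj_exponent hp)).comp (continuous_phiTail hp n)).intervalIntegrable
      _ _)
    (fun θ hθ => psi_pos (one_lt_conj_exponent hp) (h θ ⟨hθ.1.le, hθ.2.trans_le hx.2⟩)) hx.1

lemma phi_pos (hp : 1 < p) : ∀ n, ∀ x ∈ Ioc 0 (piP p / 2), 0 < phi p n x
  | 0 => fun _ _ => one_pos
  | n + 1 => fun _ hx => phi_succ_pos_of_pos hp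
    (fun _ hy => phiTail_pos_of_pos hp (fun z hz => phi_pos hp n z ⟨hz.1, hz.2.le⟩) hy) hx

lemma phiTail_pos (hp : 1 < p) (n : ℕ) {x : ℝ} (hx : x ∈ Ico 0 (piP p / 2)) :
    0 < phiTail p n x :=
  phiTail_pos_of_pos hp (fun y hy => phi_pos hp n y ⟨hy.1, hy.2.le⟩) hx

lemma phi_nonneg (hp : 1 < p) (n : ℕ) {x : ℝ} (hx : x ∈ Icc 0 (piP p / 2)) : 0 ≤ phi p n x := by
  rcases hx.1.eq_or_lt with rfl | hx0
  · cases n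
    · exact zero_le_one
    · exact (phi_succ_zero _).ge
  · exact (phi_pos hp n x ⟨hx0, hx.2⟩).le

lemma phiTail_nonneg (hp : 1 < p) (n : ℕ) {x : ℝ} (hx : x ∈ Icc 0 (piP p / 2)) :
    0 ≤ phiTail p n x := by
  rcases hx.2.eq_or_lt with rfl | hxT
  · exact (phiTail_piP_half n).ge
  · exact (phiTail_pos hp n ⟨hx.1, hxT⟩).le

lemma monotoneOn_phi_succ (hp : 1 < p) (n : ℕ) : MonotoneOn (phi p (n + 1)) (Icc 0 (piP p / 2)) :=
  monotoneOn_of_deriv_nonneg (convex_Icc _ _) (continuous_phi hp _).continuousOn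
    (fun x _ => (hasDerivAt_phi_succ hp n x).differentiableAt.differentiableWithinAt)
    fun x hx => by
      rw [interior_Icc] at hx
      rw [(hasDerivAt_phi_succ hp n x).deriv]
      exact psi_nonneg (one_lt_conj_exponent hp) (phiTail_nonneg hp n (Ioo_subset_Icc_self hx))

lemma antitoneOn_phi_div_phi_succ (hp : 1 < p) :
    ∀ n, AntitoneOn (fun x => phi p n x / phi p (n + 1) x) (Ioc 0 (piP p / 2))
  | 0 => fun x hx y hy hxy => one_div_le_one_div_of_le (phi_pos hp 1 x hx)
      (monotoneOn_phi_succ hp 0 (Ioc_subset_Icc_self hx) (Ioc_subset_Icc_self hy) hxy)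
  | n + 1 => by
    have hq := one_lt_conj_exponent hp
    have hpsi_phi : AntitoneOn (fun x => psi p (phi p n x) / psi p (phi p (n + 1) x))
        (Ioo 0 (piP p / 2)) :=
      ((antitoneOn_phi_div_phi_succ hp n).mono Ioo_subset_Ioc_self).psi_div_psi hp
        (fun x hx => phi_nonneg hp n (Ioo_subset_Icc_self hx))
        (fun x hx => phi_nonneg hp (n + 1) (Ioo_subset_Icc_self hx))
    have htail : AntitoneOn (fun x => phiTail p n x / phiTail p (n + 1) x) (Ico 0 (piP p / 2)) :=
      antitoneOn_div_of_antitoneOn_deriv_div_right (fun x _ => hasDerivAt_phiTail hp n x)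
        (fun x _ => hasDerivAt_phiTail hp (n + 1) x) (phiTail_piP_half n) (phiTail_piP_half _)
        (fun x hx => neg_neg_iff_pos.mpr (psi_pos hp (phi_pos hp _ x (Ioo_subset_Ioc_self hx))))
        (by simpa only [neg_div_neg_eq] using hpsi_phi)
    have hderiv : AntitoneOn
        (fun x => psi (p / (p - 1)) (phiTail p n x) / psi (p / (p - 1)) (phiTail p (n + 1) x))
        (Ioo 0 (piP p / 2)) :=
      (htail.mono Ioo_subset_Ico_self).psi_div_psi hq
        (fun x hx => phiTail_nonneg hp n (Ioo_subset_Icc_self hx))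
        (fun x hx => phiTail_nonneg hp (n + 1) (Ioo_subset_Icc_self hx))
    exact antitoneOn_div_of_antitoneOn_deriv_div_left (fun x _ => hasDerivAt_phi_succ hp n x)
      (fun x _ => hasDerivAt_phi_succ hp (n + 1) x) (phi_succ_zero n) (phi_succ_zero (n + 1))
      (fun x hx => psi_pos hq (phiTail_pos hp _ (Ioo_subset_Ico_self hx))) hderiv

lemma tendsto_phi_succ_div_phi_succ_succ (hp : 1 < p) (n : ℕ) :
    Tendsto (fun x => phi p (n + 1) x / phi p (n + 2) x) (𝓝[>] 0)
      (𝓝 (psi (p / (p - 1)) (phiTail p n 0 / phiTail p (n + 1) 0))) := by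
  rw [psi_div]
  refine (tendsto_div_nhdsNE_of_hasDerivAt (hasDerivAt_phi_succ hp n 0)
    (hasDerivAt_phi_succ hp (n + 1) 0) (phi_succ_zero n) (phi_succ_zero (n + 1)) ?_).mono_left
    (nhdsWithin_mono 0 fun x hx => ne_of_gt hx)
  exact (psi_pos (one_lt_conj_exponent hp) (phiTail_pos hp _ ⟨le_rfl, half_pos (piP_pos hp)⟩)).ne'

lemma sSup_phi_succ_div_phi_succ_succ (hp : 1 < p) (n : ℕ) :
    sSup ((fun x => phi p (n + 1) x / phi p (n + 2) x) '' Ioc 0 (piP p / 2)) =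
      psi (p / (p - 1)) (phiTail p n 0 / phiTail p (n + 1) 0) :=
  (antitoneOn_phi_div_phi_succ hp (n + 1)).csSup_image_Ioc_eq (half_pos (piP_pos hp))
    (tendsto_phi_succ_div_phi_succ_succ hp n)

lemma phiTail_succ_div_le (hp : 1 < p) (n : ℕ) :
    phiTail p (n + 1) 0 / phiTail p (n + 2) 0 ≤ phiTail p n 0 / phiTail p (n + 1) 0 := by
  have hT := half_pos (piP_pos hp)
  set c := phiTail p n 0 / phiTail p (n + 1) 0
  have hc : 0 ≤ c := div_nonneg (phiTail_nonneg hp n ⟨le_rfl, hT.le⟩)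
    (phiTail_nonneg hp _ ⟨le_rfl, hT.le⟩)
  have hpointwise : ∀ s ∈ Icc 0 (piP p / 2),
      psi p (phi p (n + 1) s) ≤ c * psi p (phi p (n + 2) s) := by
    intro s hs
    rcases hs.1.eq_or_lt with rfl | hs0
    · simp only [phi_succ_zero, psi_zero, mul_zero, le_refl]
    have hle : phi p (n + 1) s ≤ psi (p / (p - 1)) c * phi p (n + 2) s := by
      rw [← div_le_iff₀ (phi_pos hp _ s ⟨hs0, hs.2⟩)]
      exact (antitoneOn_phi_div_phi_succ hp (n + 1)).le_of_tendsto_nhdsGT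
        (tendsto_phi_succ_div_phi_succ_succ hp n) ⟨hs0, hs.2⟩
    calc psi p (phi p (n + 1) s) ≤ psi p (psi (p / (p - 1)) c * phi p (n + 2) s) :=
          monotoneOn_psi hp (phi_nonneg hp _ hs)
            (mul_nonneg (psi_nonneg (one_lt_conj_exponent hp) hc) (phi_nonneg hp _ hs)) hle
      _ = c * psi p (phi p (n + 2) s) := by rw [psi_mul, psi_psi_conj hp hc]
  have hint : phiTail p (n + 1) 0 ≤ c * phiTail p (n + 2) 0 := by
    rw [phiTail, phiTail, ← intervalIntegral.integral_const_mul]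
    exact intervalIntegral.integral_mono_on hT.le
      (((continuous_psi hp).comp (continuous_phi hp _)).intervalIntegrable _ _)
      ((continuous_const.mul ((continuous_psi hp).comp (continuous_phi hp _))).intervalIntegrable
        _ _) hpointwise
  rwa [div_le_iff₀ (phiTail_pos hp _ ⟨le_rfl, hT⟩)]

end Phi

theorem phi_quotient_sup (p : ℝ) (hp : 1 < p) :
    (∀ n : ℕ, 1 ≤ n →
      sSup ((fun x => phi p n x / phi p (n + 1) x) '' Ioc 0 (piP p / 2)) =
        psi (p / (p - 1))
          ((∫ s in (0:ℝ)..(piP p / 2), psi p (phi p (n - 1) s)) /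
            ∫ s in (0:ℝ)..(piP p / 2), psi p (phi p n s)) ∧
      Tendsto (fun x => phi p n x / phi p (n + 1) x) (nhdsWithin 0 (Ioi 0))
        (nhds (sSup ((fun x => phi p n x / phi p (n + 1) x) '' Ioc 0 (piP p / 2))))) ∧
    (∀ n : ℕ, 2 ≤ n →
      sSup ((fun x => phi p n x / phi p (n + 1) x) '' Ioc 0 (piP p / 2)) ≤
        sSup ((fun x => phi p (n - 1) x / phi p n x) '' Ioc 0 (piP p / 2))) := by
  refine ⟨fun n hn => ?_, fun n hn => ?_⟩
  · obtain ⟨m, rfl⟩ := Nat.exists_eq_add_of_le' hn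
    refine ⟨sSup_phi_succ_div_phi_succ_succ hp m, ?_⟩
    rw [sSup_phi_succ_div_phi_succ_succ hp m]
    exact tendsto_phi_succ_div_phi_succ_succ hp m
  · obtain ⟨m, rfl⟩ := Nat.exists_eq_add_of_le' hn
    have h0 : ∀ k, 0 ≤ phiTail p k 0 := fun k =>
      phiTail_nonneg hp k ⟨le_rfl, (half_pos (piP_pos hp)).le⟩
    refine (sSup_phi_succ_div_phi_succ_succ hp (m + 1)).trans_le
      (le_of_le_of_eq ?_ (sSup_phi_succ_div_phi_succ_succ hp m).symm)
    exact monotoneOn_psi (one_lt_conj_exponent hp) (div_nonneg (h0 _) (h0 _))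
      (div_nonneg (h0 _) (h0 _)) (phiTail_succ_div_le hp m)
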